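/- Let 𝔅 = (B,W) be a box arising from the dg construction (Lemma on boxes from differential graded tensor algebras, with Ū a projective bimodule). A morphism f : X → Y in 𝔅-mod is an isomorphism if and only if each component f_i : X(i) → Y(i) (the component on the grouplike generator ω_i) is an isomorphism of k-vector spaces. -/

import Mathlib

/-!  A minimal development of the tensor product `M ⊗_B N` over a
(possibly noncommutative) `k`-algebra `B`, where `M` is a right `B`-module
(via `Bᵐᵒᵖ`) and `N` is a left `B`-module.  It is realized as the quotient of
`M ⊗[k] N` by the balancing relations. -/

open TensorProduct MulOpposite

set_option linter.unusedSectionVars false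

section TBLib

variable (k : Type) [Field k] (B : Type) [Ring B] [Algebra k B]

variable (M N : Type)
  [AddCommGroup M] [Module k M] [Module Bᵐᵒᵖ M] [IsScalarTower k Bᵐᵒᵖ M]
  [AddCommGroup N] [Module k N] [Module B N] [IsScalarTower k B N]

/-- The balancing relations for the tensor product over `B`. -/
def balRel : Submodule k (M ⊗[k] N) :=
  Submodule.span k {x | ∃ (b : B) (m : M) (n : N), x = (op b • m) ⊗ₜ[k] n - m ⊗ₜ[k] (b • n)}

/-- The tensor product `M ⊗_B N` over the algebra `B`. -/
abbrev TB : Type := (M ⊗[k] N) ⧸ balRel k B M N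

noncomputable def TB.mk : M →ₗ[k] N →ₗ[k] TB k B M N :=
  (TensorProduct.mk k M N).compr₂ (balRel k B M N).mkQ

lemma TB.mk_def (m : M) (n : N) :
    TB.mk k B M N m n = Submodule.Quotient.mk (m ⊗ₜ[k] n) := rfl

lemma TB.mk_balance (b : B) (m : M) (n : N) :
    TB.mk k B M N (op b • m) n = TB.mk k B M N m (b • n) := by
  rw [TB.mk_def, TB.mk_def, Submodule.Quotient.eq]
  exact Submodule.subset_span ⟨b, m, n, rfl⟩

theorem TB.ind {p : TB k B M N → Prop} (h0 : p 0)
    (hmk : ∀ m n, p (TB.mk k B M N m n))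
    (hadd : ∀ x y, p x → p y → p (x + y)) : ∀ x, p x := by
  intro x
  obtain ⟨y, rfl⟩ := Submodule.Quotient.mk_surjective _ x
  induction y using TensorProduct.induction_on with
  | zero => simpa using h0
  | tmul m n => exact hmk m n
  | add a b ha hb => rw [Submodule.Quotient.mk_add]; exact hadd _ _ ha hb

theorem TB.hom_ext {P : Type} [AddCommGroup P] [Module k P]
    {f g : TB k B M N →ₗ[k] P}
    (h : ∀ m n, f (TB.mk k B M N m n) = g (TB.mk k B M N m n)) : f = g := by
  apply LinearMap.ext; intro x
  refine TB.ind k B M N (p := fun x => f x = g x) (by simp) h (fun a b ha hb => ?_) x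
  simp [map_add, ha, hb]

noncomputable def TB.lift {P : Type} [AddCommGroup P] [Module k P]
    (φ : M →ₗ[k] N →ₗ[k] P)
    (hφ : ∀ (b : B) (m : M) (n : N), φ (op b • m) n = φ m (b • n)) :
    TB k B M N →ₗ[k] P :=
  Submodule.liftQ _ (TensorProduct.lift φ) (by
    rw [balRel, Submodule.span_le]
    rintro x ⟨b, m, n, rfl⟩
    simp only [SetLike.mem_coe, LinearMap.mem_ker, map_sub, TensorProduct.lift.tmul, hφ, sub_self])

@[simp] lemma TB.lift_mk {P : Type} [AddCommGroup P] [Module k P]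
    (φ : M →ₗ[k] N →ₗ[k] P) (hφ : ∀ (b : B) (m : M) (n : N), φ (op b • m) n = φ m (b • n))
    (m : M) (n : N) :
    TB.lift k B M N φ hφ (TB.mk k B M N m n) = φ m n := rfl


section SmulLin

variable {S : Type} [Ring S] [Module S M] [SMulCommClass k S M]

/-- Scalar multiplication by `s : S` as a `k`-linear map. -/
def smulLin (s : S) : M →ₗ[k] M where
  toFun m := s • m
  map_add' a b := smul_add s a b
  map_smul' c m := (smul_comm c s m).symm

@[simp] lemma smulLin_apply (s : S) (m : M) : smulLin k M s m = s • m := rfl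

end SmulLin

section LeftAction

variable {S : Type} [Ring S] [Module S M] [SMulCommClass S Bᵐᵒᵖ M] [SMulCommClass k S M]

noncomputable def TB.lsmulHom (s : S) : TB k B M N →ₗ[k] TB k B M N :=
  TB.lift k B M N
    ((TB.mk k B M N).comp (smulLin k M s))
    (by
      intro b m n
      show TB.mk k B M N (s • (op b • m)) n = TB.mk k B M N (s • m) (b • n)
      rw [smul_comm s (op b) m, TB.mk_balance])

@[simp] lemma TB.lsmulHom_mk (s : S) (m : M) (n : N) :
    TB.lsmulHom k B M N s (TB.mk k B M N m n) = TB.mk k B M N (s • m) n := rfl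

/-- The left action of a ring `S` (acting on `M` on the left, commuting with the
right `B`-action) on `M ⊗_B N`. -/
noncomputable def TB.moduleLeft : Module S (TB k B M N) where
  smul s x := TB.lsmulHom k B M N s x
  one_smul x := by
    refine TB.ind k B M N (p := fun x => TB.lsmulHom k B M N (1 : S) x = x)
      (by simp) (fun m n => by simp) (fun a b ha hb => ?_) x
    simp only [map_add, ha, hb]
  mul_smul s t x := by
    refine TB.ind k B M N
      (p := fun x => TB.lsmulHom k B M N (s * t) x
        = TB.lsmulHom k B M N s (TB.lsmulHom k B M N t x))
      (by simp) (fun m n => by simp [mul_smul]) (fun a b ha hb => ?_) x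
    simp only [map_add, ha, hb]
  smul_zero s := map_zero _
  smul_add s x y := map_add _ x y
  add_smul s t x := by
    refine TB.ind k B M N
      (p := fun x => TB.lsmulHom k B M N (s + t) x
        = TB.lsmulHom k B M N s x + TB.lsmulHom k B M N t x)
      (by simp) (fun m n => by simp [add_smul, map_add]) (fun a b ha hb => ?_) x
    simp only [map_add, ha, hb]
    abel
  zero_smul x := by
    refine TB.ind k B M N (p := fun x => TB.lsmulHom k B M N (0 : S) x = 0)
      (by simp) (fun m n => by simp) (fun a b ha hb => ?_) x
    simp only [map_add, ha, hb, add_zero]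

end LeftAction

section LeftB

variable [Module B M] [IsScalarTower k B M] [SMulCommClass B Bᵐᵒᵖ M]

noncomputable instance TB.instModuleLeftB : Module B (TB k B M N) :=
  TB.moduleLeft k B M N (S := B)

@[simp] lemma TB.smul_mk (b : B) (m : M) (n : N) :
    b • TB.mk k B M N m n = TB.mk k B M N (b • m) n := rfl

instance TB.instTowerLeftB : IsScalarTower k B (TB k B M N) := by
  constructor
  intro c b x
  refine TB.ind k B M N (p := fun x => (c • b) • x = c • b • x)
    (by simp) (fun m n => ?_) (fun a y ha hy => ?_) x
  · show (c • b) • TB.mk k B M N m n = c • b • TB.mk k B M N m n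
    rw [TB.smul_mk, TB.smul_mk, smul_assoc, map_smul, LinearMap.smul_apply]
  · show (c • b) • (a + y) = c • b • (a + y)
    rw [smul_add, smul_add, smul_add]
    exact congrArg₂ (· + ·) ha hy

end LeftB

section RightB

variable [Module Bᵐᵒᵖ N] [IsScalarTower k Bᵐᵒᵖ N] [SMulCommClass B Bᵐᵒᵖ N]

noncomputable def TB.rsmulHom (b : Bᵐᵒᵖ) : TB k B M N →ₗ[k] TB k B M N :=
  TB.lift k B M N
    ((TB.mk k B M N).compl₂ (smulLin k N b))
    (by
      intro c m n
      show TB.mk k B M N (op c • m) (b • n) = TB.mk k B M N m (b • (c • n))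
      rw [TB.mk_balance, smul_comm c b n])

@[simp] lemma TB.rsmulHom_mk (b : Bᵐᵒᵖ) (m : M) (n : N) :
    TB.rsmulHom k B M N b (TB.mk k B M N m n) = TB.mk k B M N m (b • n) := rfl

noncomputable instance TB.instModuleRightB : Module Bᵐᵒᵖ (TB k B M N) where
  smul b x := TB.rsmulHom k B M N b x
  one_smul x := by
    refine TB.ind k B M N (p := fun x => TB.rsmulHom k B M N (1 : Bᵐᵒᵖ) x = x)
      (by simp) (fun m n => by simp) (fun a b ha hb => ?_) x
    simp only [map_add, ha, hb]
  mul_smul s t x := by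
    refine TB.ind k B M N
      (p := fun x => TB.rsmulHom k B M N (s * t) x
        = TB.rsmulHom k B M N s (TB.rsmulHom k B M N t x))
      (by simp) (fun m n => by simp [mul_smul]) (fun a b ha hb => ?_) x
    simp only [map_add, ha, hb]
  smul_zero s := map_zero _
  smul_add s x y := map_add _ x y
  add_smul s t x := by
    refine TB.ind k B M N
      (p := fun x => TB.rsmulHom k B M N (s + t) x
        = TB.rsmulHom k B M N s x + TB.rsmulHom k B M N t x)
      (by simp) (fun m n => by simp [add_smul, map_add]) (fun a b ha hb => ?_) x
    simp only [map_add, ha, hb]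
    abel
  zero_smul x := by
    refine TB.ind k B M N (p := fun x => TB.rsmulHom k B M N (0 : Bᵐᵒᵖ) x = 0)
      (by simp) (fun m n => by simp) (fun a b ha hb => ?_) x
    simp only [map_add, ha, hb, add_zero]

@[simp] lemma TB.op_smul_mk (b : Bᵐᵒᵖ) (m : M) (n : N) :
    b • TB.mk k B M N m n = TB.mk k B M N m (b • n) := rfl

instance TB.instTowerRightB : IsScalarTower k Bᵐᵒᵖ (TB k B M N) := by
  constructor
  intro c b x
  refine TB.ind k B M N (p := fun x => (c • b) • x = c • b • x)
    (by simp) (fun m n => ?_) (fun a y ha hy => ?_) x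
  · show (c • b) • TB.mk k B M N m n = c • b • TB.mk k B M N m n
    rw [TB.op_smul_mk, TB.op_smul_mk, smul_assoc, map_smul]
  · show (c • b) • (a + y) = c • b • (a + y)
    rw [smul_add, smul_add, smul_add]
    exact congrArg₂ (· + ·) ha hy

end RightB

section Map

variable {M' N' : Type}
  [AddCommGroup M'] [Module k M'] [Module Bᵐᵒᵖ M'] [IsScalarTower k Bᵐᵒᵖ M']
  [AddCommGroup N'] [Module k N'] [Module B N'] [IsScalarTower k B N']

noncomputable def TB.map (f : M →ₗ[k] M') (g : N →ₗ[k] N')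
    (hf : ∀ (b : B) (m : M), f (op b • m) = op b • f m)
    (hg : ∀ (b : B) (n : N), g (b • n) = b • g n) :
    TB k B M N →ₗ[k] TB k B M' N' :=
  TB.lift k B M N ((TB.mk k B M' N').compl₁₂ f g)
    (by intro b m n; simp [LinearMap.compl₁₂_apply, hf, hg, TB.mk_balance])

@[simp] lemma TB.map_mk (f : M →ₗ[k] M') (g : N →ₗ[k] N')
    (hf : ∀ (b : B) (m : M), f (op b • m) = op b • f m)
    (hg : ∀ (b : B) (n : N), g (b • n) = b • g n) (m : M) (n : N) :
    TB.map k B M N f g hf hg (TB.mk k B M N m n) = TB.mk k B M' N' (f m) (g n) := rfl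

end Map


section Assoc

variable (P : Type) [AddCommGroup P] [Module k P] [Module B P] [IsScalarTower k B P]
variable [Module B N] [IsScalarTower k B N]
variable [Module Bᵐᵒᵖ N] [IsScalarTower k Bᵐᵒᵖ N] [SMulCommClass B Bᵐᵒᵖ N]

noncomputable def TB.innerPsi : P →ₗ[k] (TB k B M N →ₗ[k] TB k B M (TB k B N P)) where
  toFun p := TB.lift k B M N
      ((TB.mk k B M (TB k B N P)).compl₂ ((TB.mk k B N P).flip p))
      (by
        intro b m n
        simp only [LinearMap.compl₂_apply, LinearMap.flip_apply]
        rw [TB.mk_balance k B M (TB k B N P) b m, TB.smul_mk])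
  map_add' p q := TB.hom_ext k B M N (by intro m n; simp [map_add])
  map_smul' c p := TB.hom_ext k B M N (by intro m n; simp)

noncomputable def TB.assocMap :
    TB k B (TB k B M N) P →ₗ[k] TB k B M (TB k B N P) :=
  TB.lift k B (TB k B M N) P (TB.innerPsi k B M N P).flip
    (by
      intro b x p
      simp only [LinearMap.flip_apply]
      refine TB.ind k B M N
        (p := fun x => TB.innerPsi k B M N P p (op b • x)
          = TB.innerPsi k B M N P (b • p) x)
        (by simp) (fun m n => ?_) (fun a y ha hy => ?_) x
      · show TB.innerPsi k B M N P p (op b • TB.mk k B M N m n)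
          = TB.innerPsi k B M N P (b • p) (TB.mk k B M N m n)
        rw [TB.op_smul_mk]
        simp only [TB.innerPsi, LinearMap.coe_mk, AddHom.coe_mk, TB.lift_mk,
          LinearMap.compl₂_apply, LinearMap.flip_apply]
        rw [TB.mk_balance]
      · show TB.innerPsi k B M N P p (op b • (a + y))
          = TB.innerPsi k B M N P (b • p) (a + y)
        rw [smul_add, map_add, map_add]
        exact congrArg₂ (· + ·) ha hy)

@[simp] lemma TB.assocMap_mk (m : M) (n : N) (p : P) :
    TB.assocMap k B M N P (TB.mk k B (TB k B M N) P (TB.mk k B M N m n) p)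
      = TB.mk k B M (TB k B N P) m (TB.mk k B N P n p) := rfl

end Assoc

end TBLib
section BoxLib

variable (k : Type) [Field k] (B : Type) [Ring B] [Algebra k B]
variable (W : Type) [AddCommGroup W] [Module k W] [Module B W] [Module Bᵐᵒᵖ W]
  [IsScalarTower k B W] [IsScalarTower k Bᵐᵒᵖ W] [SMulCommClass B Bᵐᵒᵖ W]
variable (X Y Z : Type)
  [AddCommGroup X] [Module k X] [Module B X] [IsScalarTower k B X]
  [AddCommGroup Y] [Module k Y] [Module B Y] [IsScalarTower k B Y]
  [AddCommGroup Z] [Module k Z] [Module B Z] [IsScalarTower k B Z]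

/-- `f : W →ₗ[k] Hom_k(X,Y)` is a morphism of box representations when it is a
`B`-`B`-bimodule map, where `Hom_k(X,Y)` carries the bimodule structure
`(b · f · b') (x) = b • f (b' • x)`. -/
def IsBoxHom (f : W →ₗ[k] X →ₗ[k] Y) : Prop :=
  (∀ (b : B) (w : W) (x : X), f (b • w) x = b • f w x) ∧
  (∀ (b : B) (w : W) (x : X), f (op b • w) x = f w (b • x))

/-- Box morphisms form a `k`-submodule of the space of bilinear maps. -/
def boxHomSub : Submodule k (W →ₗ[k] X →ₗ[k] Y) where
  carrier := {f | IsBoxHom k B W X Y f}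
  add_mem' := fun hf hg => ⟨fun b w x => by
      simp only [LinearMap.add_apply, hf.1 b w x, hg.1 b w x, smul_add],
    fun b w x => by simp only [LinearMap.add_apply, hf.2 b w x, hg.2 b w x]⟩
  zero_mem' := ⟨fun b w x => by simp, fun b w x => by simp⟩
  smul_mem' := fun c f hf => ⟨fun b w x => by
      simp only [LinearMap.smul_apply, hf.1 b w x, smul_comm c b],
    fun b w x => by simp only [LinearMap.smul_apply, hf.2 b w x]⟩

/-- The composite `v₂ ∘ (g ⊗ f)` on `W ⊗_B W`. -/
noncomputable def boxCompAux
    (g : W →ₗ[k] Y →ₗ[k] Z) (f : W →ₗ[k] X →ₗ[k] Y)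
    (hg : ∀ (b : B) (w : W) (y : Y), g (op b • w) y = g w (b • y))
    (hf : ∀ (b : B) (w : W) (x : X), f (b • w) x = b • f w x) :
    TB k B W W →ₗ[k] (X →ₗ[k] Z) :=
  TB.lift k B W W ((LinearMap.llcomp k X Y Z).compl₁₂ g f) (by
    intro b w1 w2
    ext x
    simp only [LinearMap.compl₁₂_apply, LinearMap.llcomp_apply, hg, hf])

@[simp] lemma boxCompAux_mk (g : W →ₗ[k] Y →ₗ[k] Z) (f : W →ₗ[k] X →ₗ[k] Y)
    (hg : ∀ (b : B) (w : W) (y : Y), g (op b • w) y = g w (b • y))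
    (hf : ∀ (b : B) (w : W) (x : X), f (b • w) x = b • f w x) (w1 w2 : W) (x : X) :
    boxCompAux k B W X Y Z g f hg hf (TB.mk k B W W w1 w2) x = g w1 (f w2 x) := rfl

/-- Composition of morphisms of box representations, `v₂ ∘ (g ⊗ f) ∘ μ`. -/
noncomputable def boxComp (μ : W →ₗ[k] TB k B W W)
    (g : W →ₗ[k] Y →ₗ[k] Z) (f : W →ₗ[k] X →ₗ[k] Y)
    (hg : ∀ (b : B) (w : W) (y : Y), g (op b • w) y = g w (b • y))
    (hf : ∀ (b : B) (w : W) (x : X), f (b • w) x = b • f w x) :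
    W →ₗ[k] X →ₗ[k] Z :=
  (boxCompAux k B W X Y Z g f hg hf).comp μ

lemma boxComp_apply (μ : W →ₗ[k] TB k B W W)
    (g : W →ₗ[k] Y →ₗ[k] Z) (f : W →ₗ[k] X →ₗ[k] Y) (hg hf) (w : W) :
    boxComp k B W X Y Z μ g f hg hf w = boxCompAux k B W X Y Z g f hg hf (μ w) := rfl

theorem boxComp_isBoxHom (μ : W →ₗ[k] TB k B W W)
    (hμl : ∀ (b : B) (w : W), μ (b • w) = b • μ w)
    (hμr : ∀ (b : B) (w : W), μ (op b • w) = op b • μ w)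
    {f : W →ₗ[k] X →ₗ[k] Y} {g : W →ₗ[k] Y →ₗ[k] Z}
    (hf : IsBoxHom k B W X Y f) (hg : IsBoxHom k B W Y Z g) :
    IsBoxHom k B W X Z (boxComp k B W X Y Z μ g f hg.2 hf.1) := by
  constructor
  · intro b w x
    have key : ∀ t, boxCompAux k B W X Y Z g f hg.2 hf.1 (b • t) x
        = b • boxCompAux k B W X Y Z g f hg.2 hf.1 t x := by
      refine TB.ind k B W W
        (p := fun t => boxCompAux k B W X Y Z g f hg.2 hf.1 (b • t) x
          = b • boxCompAux k B W X Y Z g f hg.2 hf.1 t x) (by simp) ?_ ?_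
      · intro w1 w2
        rw [TB.smul_mk, boxCompAux_mk, boxCompAux_mk]
        exact hg.1 b w1 (f w2 x)
      · intro a y ha hy
        simp only [smul_add, map_add, LinearMap.add_apply, ha, hy]
    rw [boxComp_apply, boxComp_apply, hμl, key]
  · intro b w x
    have key : ∀ t, boxCompAux k B W X Y Z g f hg.2 hf.1 (op b • t) x
        = boxCompAux k B W X Y Z g f hg.2 hf.1 t (b • x) := by
      refine TB.ind k B W W
        (p := fun t => boxCompAux k B W X Y Z g f hg.2 hf.1 (op b • t) x
          = boxCompAux k B W X Y Z g f hg.2 hf.1 t (b • x)) (by simp) ?_ ?_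
      · intro w1 w2
        rw [TB.op_smul_mk, boxCompAux_mk, boxCompAux_mk]
        exact congrArg (g w1) (hf.2 b w2 x)
      · intro a y ha hy
        simp only [smul_add, map_add, LinearMap.add_apply, ha, hy]
    rw [boxComp_apply, boxComp_apply, hμr, key]

/-- The action `B →ₗ[k] Hom_k(X,X)`. -/
noncomputable def actHom : B →ₗ[k] X →ₗ[k] X where
  toFun b := smulLin k X b
  map_add' a b := by ext x; simp [add_smul]
  map_smul' c b := by ext x; simp [smul_assoc]

@[simp] lemma actHom_apply (b : B) (x : X) : actHom k B X b x = b • x := rfl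

/-- The identity morphism of a box representation: `ε` followed by the action. -/
noncomputable def boxId (ε : W →ₗ[k] B) : W →ₗ[k] X →ₗ[k] X :=
  (actHom k B X).comp ε

@[simp] lemma boxId_apply (ε : W →ₗ[k] B) (w : W) (x : X) :
    boxId k B W X ε w x = ε w • x := rfl

theorem boxId_isBoxHom (ε : W →ₗ[k] B)
    (hεl : ∀ (b : B) (w : W), ε (b • w) = b * ε w)
    (hεr : ∀ (b : B) (w : W), ε (op b • w) = ε w * b) :
    IsBoxHom k B W X X (boxId k B W X ε) := by
  constructor
  · intro b w x
    rw [boxId_apply, boxId_apply, hεl, mul_smul]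
  · intro b w x
    rw [boxId_apply, boxId_apply, hεr, mul_smul]

/-- The map `W ⊗_B W → W`, `w₁ ⊗ w₂ ↦ ε(w₁) • w₂`, used in the left counit axiom. -/
noncomputable def counitLeftMap (ε : W →ₗ[k] B)
    (hεr : ∀ (b : B) (w : W), ε (op b • w) = ε w * b) : TB k B W W →ₗ[k] W :=
  TB.lift k B W W ((actHom k B W).comp ε) (by
    intro b w1 w2
    show ε (op b • w1) • w2 = ε w1 • (b • w2)
    rw [hεr, mul_smul])

@[simp] lemma counitLeftMap_mk (ε : W →ₗ[k] B) (hεr) (w1 w2 : W) :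
    counitLeftMap k B W ε hεr (TB.mk k B W W w1 w2) = ε w1 • w2 := rfl

/-- The map `W ⊗_B W → W`, `w₁ ⊗ w₂ ↦ w₁ • ε(w₂)`, used in the right counit axiom. -/
noncomputable def counitRightMap (ε : W →ₗ[k] B)
    (hεl : ∀ (b : B) (w : W), ε (b • w) = b * ε w) : TB k B W W →ₗ[k] W :=
  TB.lift k B W W
    (LinearMap.mk₂ k (fun w1 w2 => op (ε w2) • w1)
      (fun m1 m2 n => smul_add _ m1 m2)
      (fun c m n => smul_comm _ c m)
      (fun m n1 n2 => by
        show op (ε (n1 + n2)) • m = op (ε n1) • m + op (ε n2) • m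
        rw [map_add, MulOpposite.op_add, add_smul])
      (fun c m n => by
        show op (ε (c • n)) • m = c • (op (ε n) • m)
        rw [map_smul, MulOpposite.op_smul, smul_assoc]))
    (by
      intro b w1 w2
      show op (ε w2) • (op b • w1) = op (ε (b • w2)) • w1
      rw [hεl, smul_smul, MulOpposite.op_mul])

@[simp] lemma counitRightMap_mk (ε : W →ₗ[k] B) (hεl) (w1 w2 : W) :
    counitRightMap k B W ε hεl (TB.mk k B W W w1 w2) = op (ε w2) • w1 := rfl

end BoxLib

section DGBoxLib

set_option maxHeartbeats 1600000

variable (k B : Type) [Field k] [Ring B] [Algebra k B]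
variable (W : Type) [AddCommGroup W] [Module k W] [Module B W] [Module Bᵐᵒᵖ W]
  [IsScalarTower k B W] [IsScalarTower k Bᵐᵒᵖ W] [SMulCommClass B Bᵐᵒᵖ W]

/-- The sub-bimodule of the kernel spanned by the dashed generators. -/
def dashedSub {m : ℕ} (φ : Fin m → W) : Submodule k W :=
  Submodule.span k {x | ∃ (a b : B) (g : Fin m), x = a • (op b • φ g)}

/-- The subspace `Ū ⊗ Ū ⊆ W ⊗_B W` spanned by tensors of dashed elements. -/
def dashedTensor {m : ℕ} (φ : Fin m → W) : Submodule k (TB k B W W) :=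
  Submodule.span k {t | ∃ x ∈ dashedSub k B W φ, ∃ y ∈ dashedSub k B W φ,
    t = TB.mk k B W W x y}

/-- A box `(B, W, μ, ε)` obtained from the differential graded tensor algebra
construction over a directed quiver: `B` is basic and directed with complete
orthogonal idempotents `e i`, the counit kernel is generated by dashed
generators `φ g` going strictly upwards, the `ω i` are grouplike, and the
comultiplication is triangular on the dashed generators. -/
structure DirectedDGBox (n m : ℕ) where
  μ : W →ₗ[k] TB k B W W
  μ_left : ∀ (b : B) (w : W), μ (b • w) = b • μ w
  μ_right : ∀ (b : B) (w : W), μ (op b • w) = op b • μ w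
  coassoc : ∀ w : W, TB.assocMap k B W W W
      ((TB.map k B W W μ LinearMap.id μ_right (fun _ _ => rfl)) (μ w))
    = (TB.map k B W W LinearMap.id μ (fun _ _ => rfl) μ_left) (μ w)
  ε : W →ₗ[k] B
  ε_left : ∀ (b : B) (w : W), ε (b • w) = b * ε w
  ε_right : ∀ (b : B) (w : W), ε (op b • w) = ε w * b
  counit_l : ∀ w : W, counitLeftMap k B W ε ε_right (μ w) = w
  counit_r : ∀ w : W, counitRightMap k B W ε ε_left (μ w) = w
  e : Fin n → B
  e_orth : ∀ i j, e i * e j = if i = j then e i else 0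
  e_sum : ∑ i, e i = 1
  B_directed : ∀ (b : B) (i j : Fin n), i ≠ j → e j * b * e i ≠ 0 → i < j
  B_local : ∀ (b : B) (i : Fin n), ∃ c : k, e i * b * e i = c • e i
  ω : Fin n → W
  ω_supp_l : ∀ i, e i • ω i = ω i
  ω_supp_r : ∀ i, op (e i) • ω i = ω i
  ω_counit : ∀ i, ε (ω i) = e i
  ω_grouplike : ∀ i, μ (ω i) = TB.mk k B W W (ω i) (ω i)
  φ : Fin m → W
  src : Fin m → Fin n
  tgt : Fin m → Fin n
  φ_dir : ∀ g, src g < tgt g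
  φ_supp_l : ∀ g, e (tgt g) • φ g = φ g
  φ_supp_r : ∀ g, op (e (src g)) • φ g = φ g
  φ_ker : ∀ g, ε (φ g) = 0
  ker_span : ∀ w : W, ε w = 0 → w ∈ dashedSub k B W φ
  φ_comul : ∀ g, μ (φ g)
      - (TB.mk k B W W (ω (tgt g)) (φ g) + TB.mk k B W W (φ g) (ω (src g)))
    ∈ dashedTensor k B W φ

/-- A finite dimensional representation of the underlying algebra `B`. -/
structure BRep where
  carrier : Type
  [iAG : AddCommGroup carrier]
  [iMk : Module k carrier]
  [iMB : Module B carrier]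
  [iT : IsScalarTower k B carrier]
  [iFD : FiniteDimensional k carrier]

attribute [instance] BRep.iAG BRep.iMk BRep.iMB BRep.iT BRep.iFD

/-- Morphisms of box representations. -/
abbrev BoxHomT (X Y : BRep k B) : Type :=
  ↥(boxHomSub k B W X.carrier Y.carrier)

lemma boxHomT_prop {X Y : BRep k B} (f : BoxHomT k B W X Y) :
    IsBoxHom k B W X.carrier Y.carrier f.1 := f.2

variable {n m : ℕ}

/-- Composition in the category of box representations. -/
noncomputable def bComp (D : DirectedDGBox k B W n m) {X Y Z : BRep k B}
    (g : BoxHomT k B W Y Z) (f : BoxHomT k B W X Y) : BoxHomT k B W X Z :=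
  ⟨boxComp k B W X.carrier Y.carrier Z.carrier D.μ g.1 f.1
      (boxHomT_prop k B W g).2 (boxHomT_prop k B W f).1,
    boxComp_isBoxHom k B W X.carrier Y.carrier Z.carrier D.μ D.μ_left D.μ_right
      (boxHomT_prop k B W f) (boxHomT_prop k B W g)⟩

/-- The identity morphism of a box representation. -/
noncomputable def bId (D : DirectedDGBox k B W n m) (X : BRep k B) :
    BoxHomT k B W X X :=
  ⟨boxId k B W X.carrier D.ε,
    boxId_isBoxHom k B W X.carrier D.ε D.ε_left D.ε_right⟩

/-- The vertex component `X(i) = e_i • X` of a representation. -/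
noncomputable def vtx (D : DirectedDGBox k B W n m) (X : BRep k B) (i : Fin n) :
    Submodule k X.carrier :=
  LinearMap.range (actHom k B X.carrier (D.e i))

/-- The component `f_i : X(i) → Y(i)` of a morphism of box representations,
given by evaluation at the grouplike generator `ω i`. -/
noncomputable def compMap (D : DirectedDGBox k B W n m) {X Y : BRep k B}
    (f : BoxHomT k B W X Y) (i : Fin n) :
    ↥(vtx k B W D X i) →ₗ[k] ↥(vtx k B W D Y i) :=
  LinearMap.codRestrict (vtx k B W D Y i)
    ((f.1 (D.ω i)).domRestrict (vtx k B W D X i))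
    (by
      intro c
      refine ⟨f.1 (D.ω i) c.1, ?_⟩
      rw [actHom_apply, ← (boxHomT_prop k B W f).1 (D.e i) (D.ω i) c.1,
        D.ω_supp_l i]
      rfl)

/-- An exact pair of morphisms of box representations: `g ∘ f = 0` and the
vertexwise sequences `0 → X(i) → Y(i) → Z(i) → 0` are exact. -/
def IsExactPair (D : DirectedDGBox k B W n m) {X Y Z : BRep k B}
    (f : BoxHomT k B W X Y) (g : BoxHomT k B W Y Z) : Prop :=
  bComp k B W D g f = 0 ∧
  ∀ i, Function.Injective (compMap k B W D f i) ∧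
    Function.Exact (compMap k B W D f i) (compMap k B W D g i) ∧
    Function.Surjective (compMap k B W D g i)

/-- Deflations: morphisms appearing as the epi part of an exact pair. -/
def IsDeflation (D : DirectedDGBox k B W n m) {Y Z : BRep k B}
    (g : BoxHomT k B W Y Z) : Prop :=
  ∃ (X : BRep k B) (f : BoxHomT k B W X Y), IsExactPair k B W D f g

/-- Inflations: morphisms appearing as the mono part of an exact pair. -/
def IsInflation (D : DirectedDGBox k B W n m) {X Y : BRep k B}
    (f : BoxHomT k B W X Y) : Prop :=
  ∃ (Z : BRep k B) (g : BoxHomT k B W Y Z), IsExactPair k B W D f g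

end DGBoxLib

/-!
Morphisms `f : X → Y` correspond to `B`-linear maps `f♯ : W ⊗_B X → Y`, and composition is
`(g ∘ f)♯ = g♯ ∘ hat f` with `hat f = (id ⊗ f♯) ∘ (μ ⊗ id)`, the functor `W ⊗_B -` on
morphisms. Hence `f` is invertible once `hat f` is surjective and `ker (hat f) ⊆ ker c_X`,
where `c_X : W ⊗_B X → X` is the counit: for any section `s` of `hat f`, `c_X ∘ s` is then
the `♯` of an inverse.

Both conditions are proved by induction on the highest vertex `t` at which `X` or `Y` is
nonzero. As the quiver is directed, `X(t)` is a `B`-submodule, every morphism maps `X(t)`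
into `Y(t)` through its component `f_t`, and the induced morphism `X / X(t) → Y / Y(t)` still
has bijective components, so it is invertible by induction. Right exactness of `W ⊗_B -`
lifts the two conditions from the quotients, the remaining error terms living in
`W ⊗_B X(t)`, where `hat f` is `id ⊗ f_t` and `f_t` is bijective.
-/

section QuotientTensor

variable (k : Type) {B : Type} [Field k] [Ring B] [Algebra k B]
variable (M : Type) [AddCommGroup M] [Module k M] [Module Bᵐᵒᵖ M] [IsScalarTower k Bᵐᵒᵖ M]
variable {X : Type} [AddCommGroup X] [Module k X] [Module B X] [IsScalarTower k B X]
variable (U : Submodule B X)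

noncomputable def liftQSnd {P : Type} [AddCommGroup P] [Module k P]
    (φ : M →ₗ[k] X →ₗ[k] P) (h : ∀ w, ∀ u ∈ U, φ w u = 0) : M →ₗ[k] (X ⧸ U) →ₗ[k] P :=
  (((U.restrictScalars k).liftQ φ.flip fun u hu => LinearMap.ext fun w => h w u hu).comp
    (Submodule.Quotient.restrictScalarsEquiv k U).symm.toLinearMap).flip

noncomputable def tensorMkQ : TB k B M X →ₗ[k] TB k B M (X ⧸ U) :=
  TB.map k B M X LinearMap.id (U.mkQ.restrictScalars k) (fun _ _ => rfl) (fun _ _ => rfl)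

lemma tensorMkQ_surjective : Function.Surjective (tensorMkQ k M U) := by
  intro v
  induction v using TB.ind k B M (X ⧸ U) with
  | h0 => exact ⟨0, map_zero _⟩
  | hmk w q =>
    obtain ⟨x, rfl⟩ := Submodule.Quotient.mk_surjective U q
    exact ⟨TB.mk k B M X w x, rfl⟩
  | hadd a c ha hc =>
    obtain ⟨u, rfl⟩ := ha
    obtain ⟨u', rfl⟩ := hc
    exact ⟨u + u', map_add _ _ _⟩

/-- The image of `M ⊗_B U` in `M ⊗_B X`. -/
def tensorSpan : Submodule k (TB k B M X) :=
  Submodule.span k {v | ∃ w, ∃ u ∈ U, v = TB.mk k B M X w u}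

lemma mk_mem_tensorSpan (w : M) {u : X} (hu : u ∈ U) : TB.mk k B M X w u ∈ tensorSpan k M U :=
  Submodule.subset_span ⟨w, u, hu, rfl⟩

/-- The inverse of the map `(M ⊗_B X) / (M ⊗_B U) → M ⊗_B (X / U)`. -/
noncomputable def tensorQuotInv : TB k B M (X ⧸ U) →ₗ[k] TB k B M X ⧸ tensorSpan k M U :=
  TB.lift k B M (X ⧸ U)
    (liftQSnd k M U ((TB.mk k B M X).compr₂ (tensorSpan k M U).mkQ) fun w u hu =>
      (Submodule.Quotient.mk_eq_zero _).mpr (mk_mem_tensorSpan k M U w hu))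
    (by
      intro b w q
      obtain ⟨x, rfl⟩ := Submodule.Quotient.mk_surjective U q
      rw [← Submodule.Quotient.mk_smul]
      exact congrArg (tensorSpan k M U).mkQ (TB.mk_balance k B M X b w x))

lemma ker_tensorMkQ_le : LinearMap.ker (tensorMkQ k M U) ≤ tensorSpan k M U := by
  intro u hu
  have hcomp : (tensorQuotInv k M U).comp (tensorMkQ k M U) = (tensorSpan k M U).mkQ :=
    TB.hom_ext k B M X fun _ _ => rfl
  have := LinearMap.congr_fun hcomp u
  rw [LinearMap.comp_apply, LinearMap.mem_ker.mp hu, map_zero] at this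
  exact (Submodule.Quotient.mk_eq_zero _).mp this.symm

end QuotientTensor

section BoxHom

variable {k B : Type} [Field k] [Ring B] [Algebra k B]
variable {W : Type} [AddCommGroup W] [Module k W] [Module B W] [Module Bᵐᵒᵖ W]
  [IsScalarTower k B W] [IsScalarTower k Bᵐᵒᵖ W] [SMulCommClass B Bᵐᵒᵖ W]
variable {X Y Z : BRep k B}

lemma boxHom_smul_left (f : BoxHomT k B W X Y) (b : B) (w : W) (x : X.carrier) :
    f.1 (b • w) x = b • f.1 w x := f.2.1 b w x

lemma boxHom_op_smul (f : BoxHomT k B W X Y) (b : B) (w : W) (x : X.carrier) :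
    f.1 (op b • w) x = f.1 w (b • x) := f.2.2 b w x

noncomputable def sharp (f : BoxHomT k B W X Y) : TB k B W X.carrier →ₗ[k] Y.carrier :=
  TB.lift k B W X.carrier f.1 (boxHom_op_smul f)

@[simp] lemma sharp_mk (f : BoxHomT k B W X Y) (w : W) (x : X.carrier) :
    sharp f (TB.mk k B W X.carrier w x) = f.1 w x := rfl

lemma sharp_injective : Function.Injective (sharp (k := k) (W := W) (X := X) (Y := Y)) := by
  intro f g h
  apply Subtype.ext
  ext w x
  exact LinearMap.congr_fun h (TB.mk k B W X.carrier w x)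

noncomputable def ofSharp (G : TB k B W X.carrier →ₗ[k] Y.carrier)
    (hG : ∀ (b : B) u, G (b • u) = b • G u) : BoxHomT k B W X Y :=
  ⟨(TB.mk k B W X.carrier).compr₂ G,
    fun b w x => hG b (TB.mk k B W X.carrier w x),
    fun b w x => congrArg G (TB.mk_balance k B W X.carrier b w x)⟩

@[simp] lemma sharp_ofSharp (G : TB k B W X.carrier →ₗ[k] Y.carrier)
    (hG : ∀ (b : B) u, G (b • u) = b • G u) : sharp (ofSharp G hG) = G :=
  TB.hom_ext k B W X.carrier fun _ _ => rfl

noncomputable def idTensor (f : BoxHomT k B W X Y) :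
    TB k B W W →ₗ[k] X.carrier →ₗ[k] TB k B W Y.carrier :=
  TB.lift k B W W
    (LinearMap.mk₂ k (fun w₁ w₂ => (TB.mk k B W Y.carrier w₁).comp (f.1 w₂))
      (fun _ _ _ => by ext; simp) (fun _ _ _ => by ext; simp)
      (fun _ _ _ => by ext; simp) (fun _ _ _ => by ext; simp))
    (fun b w₁ w₂ => by
      ext x
      simp only [LinearMap.mk₂_apply, LinearMap.comp_apply]
      rw [TB.mk_balance, boxHom_smul_left])

@[simp] lemma idTensor_mk (f : BoxHomT k B W X Y) (w₁ w₂ : W) (x : X.carrier) :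
    idTensor f (TB.mk k B W W w₁ w₂) x = TB.mk k B W Y.carrier w₁ (f.1 w₂ x) := rfl

lemma idTensor_op_smul (f : BoxHomT k B W X Y) (b : B) (T : TB k B W W) (x : X.carrier) :
    idTensor f (op b • T) x = idTensor f T (b • x) := by
  induction T using TB.ind k B W W with
  | h0 => simp
  | hmk w₁ w₂ => rw [TB.op_smul_mk, idTensor_mk, idTensor_mk, boxHom_op_smul]
  | hadd a c ha hc => rw [smul_add, map_add, map_add, LinearMap.add_apply,
      LinearMap.add_apply, ha, hc]

lemma idTensor_smul (f : BoxHomT k B W X Y) (b : B) (T : TB k B W W) (x : X.carrier) :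
    idTensor f (b • T) x = b • idTensor f T x := by
  induction T using TB.ind k B W W with
  | h0 => simp
  | hmk w₁ w₂ => rfl
  | hadd a c ha hc => rw [smul_add, map_add, map_add, LinearMap.add_apply,
      LinearMap.add_apply, ha, hc, smul_add]

lemma boxCompAux_smul (g : BoxHomT k B W Y Z) (f : BoxHomT k B W X Y) (b : B)
    (T : TB k B W W) (x : X.carrier) :
    boxCompAux k B W X.carrier Y.carrier Z.carrier g.1 f.1 g.2.2 f.2.1 (b • T) x
      = b • boxCompAux k B W X.carrier Y.carrier Z.carrier g.1 f.1 g.2.2 f.2.1 T x := by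
  induction T using TB.ind k B W W with
  | h0 => simp
  | hmk w₁ w₂ => rw [TB.smul_mk, boxCompAux_mk, boxCompAux_mk, boxHom_smul_left]
  | hadd a c ha hc => rw [smul_add, map_add, map_add, LinearMap.add_apply,
      LinearMap.add_apply, ha, hc, smul_add]

noncomputable def idTensorComp (g : BoxHomT k B W Y Z) (f : BoxHomT k B W X Y) :
    TB k B W (TB k B W W) →ₗ[k] X.carrier →ₗ[k] TB k B W Z.carrier :=
  TB.lift k B W (TB k B W W)
    (LinearMap.mk₂ k
      (fun a T => (TB.mk k B W Z.carrier a).comp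
        (boxCompAux k B W X.carrier Y.carrier Z.carrier g.1 f.1 g.2.2 f.2.1 T))
      (fun _ _ _ => by ext; simp) (fun _ _ _ => by ext; simp)
      (fun _ _ _ => by ext; simp) (fun _ _ _ => by ext; simp))
    (fun b a T => by
      ext x
      simp only [LinearMap.mk₂_apply, LinearMap.comp_apply]
      rw [TB.mk_balance, boxCompAux_smul])

end BoxHom

abbrev BRep.quot {k B : Type} [Field k] [Ring B] [Algebra k B] (X : BRep k B)
    (U : Submodule B X.carrier) : BRep k B :=
  ⟨X.carrier ⧸ U⟩

namespace DirectedDGBox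

variable {k B : Type} [Field k] [Ring B] [Algebra k B]
variable {W : Type} [AddCommGroup W] [Module k W] [Module B W] [Module Bᵐᵒᵖ W]
  [IsScalarTower k B W] [IsScalarTower k Bᵐᵒᵖ W] [SMulCommClass B Bᵐᵒᵖ W]
variable {n m : ℕ} (D : DirectedDGBox k B W n m)

def VanishesFrom (M : Type) [AddCommGroup M] [Module B M] (L : ℕ) : Prop :=
  ∀ i : Fin n, L ≤ (i : ℕ) → ∀ x : M, D.e i • x = 0

section Idempotents

variable {M : Type} [AddCommGroup M] [Module B M]

lemma e_mul_self (i : Fin n) : D.e i * D.e i = D.e i := by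
  rw [D.e_orth, if_pos rfl]

lemma e_mul_e_of_ne {i j : Fin n} (h : i ≠ j) : D.e i * D.e j = 0 := by
  rw [D.e_orth, if_neg h]

lemma e_mul_mul_e_of_lt (b : B) {i j : Fin n} (h : i < j) : D.e i * b * D.e j = 0 := by
  by_contra hne
  exact lt_asymm h (D.B_directed b j i h.ne' hne)

lemma e_smul_e_smul (i : Fin n) (x : M) : D.e i • D.e i • x = D.e i • x := by
  rw [smul_smul, e_mul_self]

lemma sum_e_smul (x : M) : ∑ i, D.e i • x = x := by
  rw [← Finset.sum_smul, D.e_sum, one_smul]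

lemma vanishesFrom_of_length_le {L : ℕ} (hL : n ≤ L) : D.VanishesFrom M L :=
  fun i hi => absurd i.isLt (not_lt.mpr (hL.trans hi))

lemma eq_zero_of_vanishesFrom_zero (hM : D.VanishesFrom M 0) (x : M) : x = 0 := by
  rw [← D.sum_e_smul x]
  exact Finset.sum_eq_zero fun i _ => hM i (Nat.zero_le _) x

/-- Arrows of `B` only go up, so on the top vertex `t` the action of `B` stays at `t`. -/
lemma e_smul_smul_of_top {t : Fin n} (hM : D.VanishesFrom M (t + 1)) {x : M}
    (hx : D.e t • x = x) (c : B) : D.e t • c • x = c • x := by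
  have hj : ∀ j ≠ t, D.e j • c • x = 0 := by
    intro j hjt
    rcases lt_or_gt_of_ne hjt with h | h
    · rw [← hx, smul_smul, smul_smul, D.e_mul_mul_e_of_lt c h, zero_smul]
    · exact hM j h _
  conv_rhs => rw [← D.sum_e_smul (c • x)]
  rw [Finset.sum_eq_single t (fun j _ hjt => hj j hjt) (fun h => absurd (Finset.mem_univ t) h)]

end Idempotents

section Evaluation

variable {X Y : BRep k B} (f : BoxHomT k B W X Y)

lemma e_smul_apply_ω (i : Fin n) (x : X.carrier) :
    D.e i • f.1 (D.ω i) x = f.1 (D.ω i) x := by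
  rw [← boxHom_smul_left, D.ω_supp_l]

/-- A dashed generator `φ g` raises the vertex, so it kills vectors at `t` once
everything above `t` vanishes in `Y`. -/
lemma apply_dashed_of_top {t : Fin n} (hY : D.VanishesFrom Y.carrier (t + 1)) {d : W}
    (hd : d ∈ dashedSub k B W D.φ) {x : X.carrier} (hx : D.e t • x = x) : f.1 d x = 0 := by
  induction hd using Submodule.span_induction with
  | mem y hy =>
    obtain ⟨a, b, g, rfl⟩ := hy
    rw [boxHom_smul_left, boxHom_op_smul, ← D.φ_supp_r g, boxHom_op_smul, ← hx, smul_smul,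
      smul_smul]
    rcases lt_or_ge (D.src g) t with h | h
    · rw [D.e_mul_mul_e_of_lt b h, zero_smul, map_zero, smul_zero]
    · rw [← D.φ_supp_l g, boxHom_smul_left,
        hY _ (Nat.succ_le_of_lt (lt_of_le_of_lt h (D.φ_dir g))) _, smul_zero]
  | zero => rw [map_zero, LinearMap.zero_apply]
  | add a c _ _ ha hc => rw [map_add, LinearMap.add_apply, ha, hc, add_zero]
  | smul c y _ hy => rw [map_smul, LinearMap.smul_apply, hy, smul_zero]

/-- Modulo the dashed generators, `op (e t) • w` is `(ε w * e t) • ω t`. -/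
lemma apply_of_top {t : Fin n} (hY : D.VanishesFrom Y.carrier (t + 1)) (w : W)
    {x : X.carrier} (hx : D.e t • x = x) : f.1 w x = D.ε w • f.1 (D.ω t) x := by
  have hker : op (D.e t) • w - (D.ε w * D.e t) • D.ω t ∈ dashedSub k B W D.φ := by
    apply D.ker_span
    rw [map_sub, D.ε_right, D.ε_left, D.ω_counit, mul_assoc, D.e_mul_self, sub_self]
  calc f.1 w x = f.1 (op (D.e t) • w) x := by rw [boxHom_op_smul, hx]
    _ = f.1 (op (D.e t) • w - (D.ε w * D.e t) • D.ω t) x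
        + f.1 ((D.ε w * D.e t) • D.ω t) x := by
      rw [← LinearMap.add_apply, ← map_add, sub_add_cancel]
    _ = D.ε w • f.1 (D.ω t) x := by
      rw [D.apply_dashed_of_top f hY hker hx, zero_add, boxHom_smul_left, mul_smul,
        D.e_smul_apply_ω]

lemma apply_ω_smul_of_top {t : Fin n} (hY : D.VanishesFrom Y.carrier (t + 1)) (c : B)
    {x : X.carrier} (hx : D.e t • x = x) : f.1 (D.ω t) (c • x) = c • f.1 (D.ω t) x := by
  rw [← boxHom_op_smul, D.apply_of_top f hY _ hx, D.ε_right, D.ω_counit, mul_smul,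
    D.e_smul_smul_of_top hY (D.e_smul_apply_ω f t x)]

end Evaluation

section Hat

variable {X Y Z : BRep k B}

/-- The functor `W ⊗_B -` on morphisms. -/
noncomputable def hat (f : BoxHomT k B W X Y) :
    TB k B W X.carrier →ₗ[k] TB k B W Y.carrier :=
  TB.lift k B W X.carrier ((idTensor f).comp D.μ) (fun b w x => by
    simp only [LinearMap.comp_apply]
    rw [D.μ_right, idTensor_op_smul])

lemma hat_mk (f : BoxHomT k B W X Y) (w : W) (x : X.carrier) :
    D.hat f (TB.mk k B W X.carrier w x) = idTensor f (D.μ w) x := rfl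

lemma hat_smul (f : BoxHomT k B W X Y) (b : B) (u : TB k B W X.carrier) :
    D.hat f (b • u) = b • D.hat f u := by
  induction u using TB.ind k B W X.carrier with
  | h0 => simp
  | hmk w x => rw [TB.smul_mk, hat_mk, hat_mk, D.μ_left, idTensor_smul]
  | hadd a c ha hc => rw [smul_add, map_add, map_add, smul_add, ha, hc]

noncomputable def counitMap (X : BRep k B) : TB k B W X.carrier →ₗ[k] X.carrier :=
  TB.lift k B W X.carrier ((actHom k B X.carrier).comp D.ε) (fun b w x => by
    simp only [LinearMap.comp_apply, actHom_apply]
    rw [D.ε_right, mul_smul])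

@[simp] lemma counitMap_mk (X : BRep k B) (w : W) (x : X.carrier) :
    D.counitMap X (TB.mk k B W X.carrier w x) = D.ε w • x := rfl

lemma counitMap_smul (X : BRep k B) (b : B) (u : TB k B W X.carrier) :
    D.counitMap X (b • u) = b • D.counitMap X u := by
  induction u using TB.ind k B W X.carrier with
  | h0 => simp
  | hmk w x => rw [TB.smul_mk, counitMap_mk, counitMap_mk, D.ε_left, mul_smul]
  | hadd a c ha hc => rw [smul_add, map_add, map_add, smul_add, ha, hc]

lemma counitMap_mem_of_mem_tensorSpan (X : BRep k B) {U : Submodule B X.carrier}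
    {u : TB k B W X.carrier} (hu : u ∈ tensorSpan k W U) : D.counitMap X u ∈ U := by
  induction hu using Submodule.span_induction with
  | mem v hv =>
    obtain ⟨w, x, hx, rfl⟩ := hv
    exact U.smul_mem _ hx
  | zero => simp
  | add a c _ _ ha hc => rw [map_add]; exact U.add_mem ha hc
  | smul c v _ hv => rw [map_smul]; exact U.smul_of_tower_mem c hv

lemma counitMap_comp_hat (f : BoxHomT k B W X Y) :
    (D.counitMap Y).comp (D.hat f) = sharp f := by
  have key : ∀ (T : TB k B W W) (x : X.carrier),
      D.counitMap Y (idTensor f T x) = f.1 (counitLeftMap k B W D.ε D.ε_right T) x := by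
    intro T x
    induction T using TB.ind k B W W with
    | h0 => simp
    | hmk w₁ w₂ => rw [idTensor_mk, counitMap_mk, counitLeftMap_mk, boxHom_smul_left]
    | hadd a c ha hc => simp only [map_add, LinearMap.add_apply, ha, hc]
  refine TB.hom_ext k B W X.carrier fun w x => ?_
  rw [LinearMap.comp_apply, hat_mk, key, D.counit_l, sharp_mk]

lemma hat_bId : D.hat (bId k B W D X) = LinearMap.id := by
  have key : ∀ (T : TB k B W W) (x : X.carrier), idTensor (bId k B W D X) T x
      = TB.mk k B W X.carrier (counitRightMap k B W D.ε D.ε_left T) x := by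
    intro T x
    induction T using TB.ind k B W W with
    | h0 => simp
    | hmk w₁ w₂ =>
      rw [idTensor_mk, counitRightMap_mk, TB.mk_balance]
      rfl
    | hadd a c ha hc => simp only [map_add, LinearMap.add_apply, ha, hc]
  refine TB.hom_ext k B W X.carrier fun w x => ?_
  rw [hat_mk, key, D.counit_r, LinearMap.id_apply]

lemma idTensor_bComp (g : BoxHomT k B W Y Z) (f : BoxHomT k B W X Y) (T : TB k B W W)
    (x : X.carrier) :
    idTensor (bComp k B W D g f) T x
      = idTensorComp g f (TB.map k B W W LinearMap.id D.μ (fun _ _ => rfl) D.μ_left T) x := by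
  induction T using TB.ind k B W W with
  | h0 => simp
  | hmk w₁ w₂ => rfl
  | hadd a c ha hc => simp only [map_add, LinearMap.add_apply, ha, hc]

lemma hat_idTensor (g : BoxHomT k B W Y Z) (f : BoxHomT k B W X Y) (T : TB k B W W)
    (x : X.carrier) :
    D.hat g (idTensor f T x) = idTensorComp g f
      (TB.assocMap k B W W W (TB.map k B W W D.μ LinearMap.id D.μ_right (fun _ _ => rfl) T))
      x := by
  have key : ∀ (T' : TB k B W W) (c : W), idTensor g T' (f.1 c x)
      = idTensorComp g f (TB.assocMap k B W W W (TB.mk k B (TB k B W W) W T' c)) x := by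
    intro T' c
    induction T' using TB.ind k B W W with
    | h0 => simp
    | hmk a₁ a₂ => rfl
    | hadd u v hu hv => simp only [map_add, LinearMap.add_apply, hu, hv]
  induction T using TB.ind k B W W with
  | h0 => simp
  | hmk a b => rw [idTensor_mk, hat_mk, TB.map_mk, key]; rfl
  | hadd u v hu hv => simp only [map_add, LinearMap.add_apply, hu, hv]

lemma hat_bComp (g : BoxHomT k B W Y Z) (f : BoxHomT k B W X Y) :
    D.hat (bComp k B W D g f) = (D.hat g).comp (D.hat f) := by
  refine TB.hom_ext k B W X.carrier fun w x => ?_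
  rw [LinearMap.comp_apply, hat_mk, hat_mk, idTensor_bComp, ← D.coassoc w, hat_idTensor]

lemma sharp_bComp (g : BoxHomT k B W Y Z) (f : BoxHomT k B W X Y) :
    sharp (bComp k B W D g f) = (sharp g).comp (D.hat f) := by
  refine TB.hom_ext k B W X.carrier fun w x => ?_
  rw [LinearMap.comp_apply, hat_mk, sharp_mk]
  show boxCompAux k B W X.carrier Y.carrier Z.carrier g.1 f.1 g.2.2 f.2.1 (D.μ w) x = _
  induction D.μ w using TB.ind k B W W with
  | h0 => simp
  | hmk a b => rfl
  | hadd u v hu hv => simp only [map_add, LinearMap.add_apply, hu, hv]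

lemma sharp_bId (X : BRep k B) : sharp (bId k B W D X) = D.counitMap X :=
  TB.hom_ext k B W X.carrier fun _ _ => rfl

end Hat

section Iso

variable {X Y : BRep k B}

def IsIso (f : BoxHomT k B W X Y) : Prop :=
  ∃ g : BoxHomT k B W Y X, bComp k B W D g f = bId k B W D X ∧ bComp k B W D f g = bId k B W D Y

lemma hat_bijective_of_isIso {f : BoxHomT k B W X Y} (hf : D.IsIso f) :
    Function.Bijective (D.hat f) := by
  obtain ⟨g, hgf, hfg⟩ := hf
  refine Function.bijective_iff_has_inverse.mpr ⟨D.hat g, fun u => ?_, fun v => ?_⟩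
  · rw [← LinearMap.comp_apply, ← hat_bComp, hgf, hat_bId, LinearMap.id_apply]
  · rw [← LinearMap.comp_apply, ← hat_bComp, hfg, hat_bId, LinearMap.id_apply]

/-- The inverse has `♯` equal to `c_X ∘ s` for a section `s` of `hat f`; the kernel
condition gives `c_X ∘ s ∘ hat f = c_X`, which makes `c_X ∘ s` `B`-linear. -/
lemma isIso_of_hat {f : BoxHomT k B W X Y} (hsurj : Function.Surjective (D.hat f))
    (hker : ∀ u, D.hat f u = 0 → D.counitMap X u = 0) : D.IsIso f := by
  obtain ⟨s, hs⟩ := (D.hat f).exists_rightInverse_of_surjective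
    (LinearMap.range_eq_top.mpr hsurj)
  set G := (D.counitMap X).comp s
  have hG : ∀ u, G (D.hat f u) = D.counitMap X u := fun u => by
    have h := hker (s (D.hat f u) - u) (by
      rw [map_sub, ← LinearMap.comp_apply _ s, hs, LinearMap.id_apply, sub_self])
    rwa [map_sub, sub_eq_zero] at h
  have hGsmul : ∀ (b : B) v, G (b • v) = b • G v := fun b v => by
    obtain ⟨u, rfl⟩ := hsurj v
    rw [← hat_smul, hG, hG, counitMap_smul]
  set g := ofSharp G hGsmul
  have hgf : bComp k B W D g f = bId k B W D X := sharp_injective <| by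
    rw [sharp_bComp, sharp_bId, sharp_ofSharp]
    exact LinearMap.ext hG
  have hhat : (D.hat f).comp (D.hat g) = LinearMap.id := LinearMap.ext fun v => by
    obtain ⟨u, rfl⟩ := hsurj v
    rw [LinearMap.comp_apply, ← LinearMap.comp_apply (D.hat g), ← hat_bComp, hgf, hat_bId,
      LinearMap.id_apply, LinearMap.id_apply]
  refine ⟨g, hgf, sharp_injective ?_⟩
  rw [sharp_bComp, sharp_bId, ← counitMap_comp_hat, LinearMap.comp_assoc, hhat,
    LinearMap.comp_id]

lemma isIso_of_vanishesFrom_zero (f : BoxHomT k B W X Y) (hX : D.VanishesFrom X.carrier 0)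
    (hY : D.VanishesFrom Y.carrier 0) : D.IsIso f :=
  ⟨0, Subtype.ext <| LinearMap.ext fun _ => LinearMap.ext fun _ =>
      (D.eq_zero_of_vanishesFrom_zero hX _).trans (D.eq_zero_of_vanishesFrom_zero hX _).symm,
    Subtype.ext <| LinearMap.ext fun _ => LinearMap.ext fun _ =>
      (D.eq_zero_of_vanishesFrom_zero hY _).trans (D.eq_zero_of_vanishesFrom_zero hY _).symm⟩

end Iso

section Components

variable {X Y Z : BRep k B}

lemma mem_vtx_iff {i : Fin n} {x : X.carrier} : x ∈ vtx k B W D X i ↔ D.e i • x = x :=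
  ⟨fun ⟨x', hx'⟩ => by rw [← hx', actHom_apply, e_smul_e_smul], fun hx => ⟨x, hx⟩⟩

lemma compMap_injective_iff (f : BoxHomT k B W X Y) (i : Fin n) :
    Function.Injective (compMap k B W D f i) ↔
      ∀ x, D.e i • x = x → f.1 (D.ω i) x = 0 → x = 0 := by
  rw [injective_iff_map_eq_zero]
  refine ⟨fun h x hx hfx => ?_, fun h x hfx => Subtype.ext (h x (D.mem_vtx_iff.mp x.2) ?_)⟩
  · exact congrArg Subtype.val (h ⟨x, D.mem_vtx_iff.mpr hx⟩ (Subtype.ext hfx))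
  · exact congrArg Subtype.val hfx

lemma compMap_surjective_iff (f : BoxHomT k B W X Y) (i : Fin n) :
    Function.Surjective (compMap k B W D f i) ↔
      ∀ y, D.e i • y = y → ∃ x, D.e i • x = x ∧ f.1 (D.ω i) x = y := by
  refine ⟨fun h y hy => ?_, fun h y => ?_⟩
  · obtain ⟨x, hx⟩ := h ⟨y, D.mem_vtx_iff.mpr hy⟩
    exact ⟨x, D.mem_vtx_iff.mp x.2, congrArg Subtype.val hx⟩
  · obtain ⟨x, hx, hfx⟩ := h y (D.mem_vtx_iff.mp y.2)
    exact ⟨⟨x, D.mem_vtx_iff.mpr hx⟩, Subtype.ext hfx⟩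

lemma compMap_bComp (g : BoxHomT k B W Y Z) (f : BoxHomT k B W X Y) (i : Fin n) :
    compMap k B W D (bComp k B W D g f) i = (compMap k B W D g i).comp (compMap k B W D f i) := by
  ext x
  show boxCompAux k B W X.carrier Y.carrier Z.carrier g.1 f.1 g.2.2 f.2.1 (D.μ (D.ω i)) x = _
  rw [D.ω_grouplike]
  rfl

lemma compMap_bId (X : BRep k B) (i : Fin n) :
    compMap k B W D (bId k B W D X) i = LinearMap.id := by
  ext x
  show D.ε (D.ω i) • (x : X.carrier) = x
  rw [D.ω_counit, D.mem_vtx_iff.mp x.2]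

lemma compMap_bijective_of_isIso {f : BoxHomT k B W X Y} (hf : D.IsIso f) (i : Fin n) :
    Function.Bijective (compMap k B W D f i) := by
  obtain ⟨g, hgf, hfg⟩ := hf
  refine Function.bijective_iff_has_inverse.mpr ⟨compMap k B W D g i, fun x => ?_, fun y => ?_⟩
  · rw [← LinearMap.comp_apply, ← compMap_bComp, hgf, compMap_bId, LinearMap.id_apply]
  · rw [← LinearMap.comp_apply, ← compMap_bComp, hfg, compMap_bId, LinearMap.id_apply]

end Components

section TopLevel

variable (t : Fin n)

def topLevel {M : Type} [AddCommGroup M] [Module B M] (hM : D.VanishesFrom M (t + 1)) :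
    Submodule B M where
  carrier := {x | D.e t • x = x}
  add_mem' {x y} (hx : D.e t • x = x) (hy : D.e t • y = y) := by
    show D.e t • (x + y) = x + y
    rw [smul_add, hx, hy]
  zero_mem' := smul_zero _
  smul_mem' c _ hx := D.e_smul_smul_of_top hM hx c

variable {t} {X Y : BRep k B} (hX : D.VanishesFrom X.carrier (t + 1))
  (hY : D.VanishesFrom Y.carrier (t + 1))

lemma mem_topLevel {x : X.carrier} : x ∈ D.topLevel t hX ↔ D.e t • x = x := Iff.rfl

lemma vanishesFrom_quot_topLevel : D.VanishesFrom (X.carrier ⧸ D.topLevel t hX) t := by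
  intro i hi q
  obtain ⟨x, rfl⟩ := Submodule.Quotient.mk_surjective _ q
  rw [← Submodule.Quotient.mk_smul, Submodule.Quotient.mk_eq_zero]
  rcases hi.eq_or_lt with h | h
  · obtain rfl : t = i := Fin.ext h
    exact D.e_smul_e_smul t x
  · rw [hX i h x]
    exact zero_mem _

lemma apply_mem_topLevel (f : BoxHomT k B W X Y) (w : W) {u : X.carrier}
    (hu : u ∈ D.topLevel t hX) : f.1 w u ∈ D.topLevel t hY := by
  rw [mem_topLevel, D.apply_of_top f hY w hu]
  exact D.e_smul_smul_of_top hY (D.e_smul_apply_ω f t u) _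

noncomputable def qmor (f : BoxHomT k B W X Y) :
    BoxHomT k B W (X.quot (D.topLevel t hX)) (Y.quot (D.topLevel t hY)) :=
  ⟨liftQSnd k W (D.topLevel t hX) (f.1.compr₂ ((D.topLevel t hY).mkQ.restrictScalars k))
      fun w _ hu => (Submodule.Quotient.mk_eq_zero _).mpr (D.apply_mem_topLevel hX hY f w hu),
    fun b w q => by
      obtain ⟨x, rfl⟩ := Submodule.Quotient.mk_surjective _ q
      exact congrArg Submodule.Quotient.mk (boxHom_smul_left f b w x),
    fun b w q => by
      obtain ⟨x, rfl⟩ := Submodule.Quotient.mk_surjective _ q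
      exact congrArg Submodule.Quotient.mk (boxHom_op_smul f b w x)⟩

@[simp] lemma qmor_apply (f : BoxHomT k B W X Y) (w : W) (x : X.carrier) :
    (D.qmor hX hY f).1 w (Submodule.Quotient.mk x) = Submodule.Quotient.mk (f.1 w x) := rfl

lemma compMap_qmor_bijective {f : BoxHomT k B W X Y}
    (hf : ∀ i, Function.Bijective (compMap k B W D f i)) (i : Fin n) :
    Function.Bijective (compMap k B W D (D.qmor hX hY f) i) := by
  rw [Function.Bijective, compMap_injective_iff, compMap_surjective_iff]
  rcases lt_or_ge i t with hi | hi
  · have hinj := (D.compMap_injective_iff f i).mp (hf i).1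
    have hsurj := (D.compMap_surjective_iff f i).mp (hf i).2
    constructor
    · intro z hz hfz
      obtain ⟨x, rfl⟩ := Submodule.Quotient.mk_surjective _ z
      rw [← hz, ← Submodule.Quotient.mk_smul] at hfz ⊢
      rw [qmor_apply, Submodule.Quotient.mk_eq_zero, mem_topLevel] at hfz
      rw [hinj _ (D.e_smul_e_smul i x) ?_, Submodule.Quotient.mk_zero]
      rw [← D.e_smul_apply_ω, ← hfz, smul_smul, D.e_mul_e_of_ne hi.ne, zero_smul]
    · intro z hz
      obtain ⟨y, rfl⟩ := Submodule.Quotient.mk_surjective _ z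
      obtain ⟨x, hx, hfx⟩ := hsurj (D.e i • y) (D.e_smul_e_smul i y)
      refine ⟨Submodule.Quotient.mk x, by rw [← Submodule.Quotient.mk_smul, hx], ?_⟩
      rw [qmor_apply, hfx, Submodule.Quotient.mk_smul, hz]
  · have hzero := D.vanishesFrom_quot_topLevel hY i hi
    refine ⟨fun z hz _ => ?_, fun z hz => ⟨0, by rw [smul_zero], ?_⟩⟩
    · rw [← hz, D.vanishesFrom_quot_topLevel hX i hi]
    · rw [map_zero, ← hz, hzero]

end TopLevel

section InductiveStep

variable {t : Fin n} {X Y : BRep k B}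

lemma hat_mk_of_top (hY : D.VanishesFrom Y.carrier (t + 1)) (f : BoxHomT k B W X Y) (w : W)
    {x : X.carrier} (hx : D.e t • x = x) :
    D.hat f (TB.mk k B W X.carrier w x) = TB.mk k B W Y.carrier w (f.1 (D.ω t) x) := by
  have key : ∀ T, idTensor f T x
      = TB.mk k B W Y.carrier (counitRightMap k B W D.ε D.ε_left T) (f.1 (D.ω t) x) := by
    intro T
    induction T using TB.ind k B W W with
    | h0 => simp
    | hmk a b => rw [idTensor_mk, counitRightMap_mk, TB.mk_balance, D.apply_of_top f hY b hx]
    | hadd u v hu hv => simp only [map_add, LinearMap.add_apply, hu, hv]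
  rw [hat_mk, key, D.counit_r]

lemma sharp_of_mem_tensorSpan (hX : D.VanishesFrom X.carrier (t + 1))
    (hY : D.VanishesFrom Y.carrier (t + 1)) (f : BoxHomT k B W X Y) {u : TB k B W X.carrier}
    (hu : u ∈ tensorSpan k W (D.topLevel t hX)) :
    sharp f u = f.1 (D.ω t) (D.counitMap X u) := by
  induction hu using Submodule.span_induction with
  | mem v hv =>
    obtain ⟨w, x, hx, rfl⟩ := hv
    rw [sharp_mk, counitMap_mk, D.apply_of_top f hY w hx, D.apply_ω_smul_of_top f hY _ hx]
  | zero => simp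
  | add a c _ _ ha hc => rw [map_add, map_add, ha, hc, map_add]
  | smul c v _ hv => rw [map_smul, map_smul, hv, map_smul]

variable (hX : D.VanishesFrom X.carrier (t + 1))
  (hY : D.VanishesFrom Y.carrier (t + 1)) (f : BoxHomT k B W X Y)

lemma tensorMkQ_comp_hat :
    (tensorMkQ k W (D.topLevel t hY)).comp (D.hat f)
      = (D.hat (D.qmor hX hY f)).comp (tensorMkQ k W (D.topLevel t hX)) := by
  refine TB.hom_ext k B W X.carrier fun w x => ?_
  show tensorMkQ k W (D.topLevel t hY) (idTensor f (D.μ w) x)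
    = idTensor (D.qmor hX hY f) (D.μ w) (Submodule.Quotient.mk x)
  induction D.μ w using TB.ind k B W W with
  | h0 => simp
  | hmk a b => rfl
  | hadd u v hu hv => simp only [map_add, LinearMap.add_apply, hu, hv]

lemma counitMap_eq_zero_of_hat_eq_zero (ht : Function.Injective (compMap k B W D f t))
    (hq : Function.Injective (D.hat (D.qmor hX hY f))) {u : TB k B W X.carrier}
    (hu : D.hat f u = 0) : D.counitMap X u = 0 := by
  have hker : u ∈ tensorSpan k W (D.topLevel t hX) := by
    refine ker_tensorMkQ_le k W _ (LinearMap.mem_ker.mpr (hq ?_))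
    rw [← LinearMap.comp_apply, ← D.tensorMkQ_comp_hat hX hY, LinearMap.comp_apply, hu,
      map_zero, map_zero]
  refine (D.compMap_injective_iff f t).mp ht _
    (D.counitMap_mem_of_mem_tensorSpan X hker) ?_
  rw [← D.sharp_of_mem_tensorSpan hX hY f hker, ← counitMap_comp_hat, LinearMap.comp_apply,
    hu, map_zero]

lemma hat_surjective_of_top (ht : Function.Surjective (compMap k B W D f t))
    (hq : Function.Surjective (D.hat (D.qmor hX hY f))) : Function.Surjective (D.hat f) := by
  have hspan : tensorSpan k W (D.topLevel t hY) ≤ LinearMap.range (D.hat f) := by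
    refine Submodule.span_le.mpr ?_
    rintro _ ⟨w, y, hy, rfl⟩
    obtain ⟨x, hx, rfl⟩ := (D.compMap_surjective_iff f t).mp ht y hy
    exact ⟨TB.mk k B W X.carrier w x, D.hat_mk_of_top hY f w hx⟩
  intro v
  obtain ⟨u', hu'⟩ := hq (tensorMkQ k W (D.topLevel t hY) v)
  obtain ⟨u, rfl⟩ := tensorMkQ_surjective k W (D.topLevel t hX) u'
  have hmem : v - D.hat f u ∈ LinearMap.ker (tensorMkQ k W (D.topLevel t hY)) := by
    rw [LinearMap.mem_ker, map_sub, ← LinearMap.comp_apply _ (D.hat f),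
      D.tensorMkQ_comp_hat hX hY, LinearMap.comp_apply, hu', sub_self]
  obtain ⟨u₂, hu₂⟩ := hspan (ker_tensorMkQ_le k W _ hmem)
  exact ⟨u + u₂, by rw [map_add, hu₂, add_sub_cancel]⟩

lemma isIso_of_isIso_qmor (hf : ∀ i, Function.Bijective (compMap k B W D f i))
    (hq : D.IsIso (D.qmor hX hY f)) : D.IsIso f :=
  have hhat := D.hat_bijective_of_isIso hq
  D.isIso_of_hat (D.hat_surjective_of_top hX hY f (hf t).2 hhat.2)
    fun _ hu => D.counitMap_eq_zero_of_hat_eq_zero hX hY f (hf t).1 hhat.1 hu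

end InductiveStep

lemma isIso_of_vanishesFrom (L : ℕ) {X Y : BRep k B} (f : BoxHomT k B W X Y)
    (hX : D.VanishesFrom X.carrier L) (hY : D.VanishesFrom Y.carrier L)
    (hf : ∀ i, Function.Bijective (compMap k B W D f i)) : D.IsIso f := by
  induction L generalizing X Y with
  | zero => exact D.isIso_of_vanishesFrom_zero f hX hY
  | succ L ih =>
    by_cases hL : L < n
    · let t : Fin n := ⟨L, hL⟩
      exact D.isIso_of_isIso_qmor (t := t) hX hY f hf
        (ih _ (D.vanishesFrom_quot_topLevel hX) (D.vanishesFrom_quot_topLevel hY)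
          (D.compMap_qmor_bijective hX hY hf))
    · exact ih f (D.vanishesFrom_of_length_le (not_lt.mp hL))
        (D.vanishesFrom_of_length_le (not_lt.mp hL)) hf

end DirectedDGBox

/-- For a box `𝔅 = (B, W)` arising from the directed dg
construction, a morphism `f : X → Y` in `𝔅-mod` is an isomorphism if and only
if each component `f_i : X(i) → Y(i)` is an isomorphism of `k`-vector
spaces. -/
theorem box_morphism_iso_iff_components_iso
    (k B : Type) [Field k] [Ring B] [Algebra k B]
    (W : Type) [AddCommGroup W] [Module k W] [Module B W] [Module Bᵐᵒᵖ W]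
    [IsScalarTower k B W] [IsScalarTower k Bᵐᵒᵖ W] [SMulCommClass B Bᵐᵒᵖ W]
    {n m : ℕ} (D : DirectedDGBox k B W n m)
    {X Y : BRep k B} (f : BoxHomT k B W X Y) :
    (∃ g : BoxHomT k B W Y X,
      bComp k B W D g f = bId k B W D X ∧ bComp k B W D f g = bId k B W D Y)
    ↔ ∀ i, Function.Bijective (compMap k B W D f i) :=
  ⟨D.compMap_bijective_of_isIso,
    D.isIso_of_vanishesFrom n f (D.vanishesFrom_of_length_le le_rfl)
      (D.vanishesFrom_of_length_le le_rfl)⟩
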